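/- Let f ∈ ℝ[x₁,…,x_n]ⁿ be a polynomial vector field, T > 0, g = (g₁,…,g_m) and h = (h₁,…,h_ℓ) tuples of polynomials in ℝ[x₁,…,x_n] such that X = {y ∈ ℝⁿ : g_i(y) ≥ 0 for all i} is closed and M = {y ∈ ℝⁿ : h_j(y) ≥ 0 for all j} satisfies M ⊆ X. Suppose the polynomials v ∈ ℝ[t, x₁,…,x_n] and w ∈ ℝ[x₁,…,x_n] satisfy: w ∈ Q(g); w − v(0,·) − 1 ∈ Q(g); −(∂_t v + ⟨∇_x v, f⟩) ∈ Q(g, (T−t)·t); and v(T,·) ∈ Q(h). Then the region of attraction R_T^M satisfies R_T^M ⊆ {y ∈ ℝⁿ : v(0,y) ≥ 0} and R_T^M ⊆ {y ∈ ℝⁿ : w(y) ≥ 1}. -/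

import Mathlib

/-!
Along a trajectory `x` that stays in `X` on `[0, T]`, the function `t ↦ v(t, x(t))` has
derivative `(∂_t v + ⟨∇_x v, f⟩)(t, x(t))`, which is nonpositive because its negative lies in
`Q(g, (T - t) t)` and `(T - t) t ≥ 0`, `g ≥ 0` there. Hence `v(0, x₀) ≥ v(T, x(T)) ≥ 0`, the last
inequality by the certificate of `v(T, ·)` on `M`. The certificate of `w - v(0, ·) - 1` on `X`
then gives `w(x₀) ≥ v(0, x₀) + 1 ≥ 1`.
-/

open MvPolynomial Set

/-- The quadratic module `Q(g)` generated by `g₁, …, g_m`: polynomials of the form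
`s₀ + s₁·g₁ + ⋯ + s_m·g_m` where each `sᵢ` is a sum of squares of polynomials. -/
def QuadraticModule {m : ℕ} {σ : Type*} (g : Fin m → MvPolynomial σ ℝ) :
    Set (MvPolynomial σ ℝ) :=
  {p | ∃ s₀ : MvPolynomial σ ℝ, ∃ s : Fin m → MvPolynomial σ ℝ,
    IsSumSq s₀ ∧ (∀ i, IsSumSq (s i)) ∧ p = s₀ + ∑ i, s i * g i}

/-- The region of attraction `R_T^M`: initial conditions `x₀` from which some solution of
`x' = f(x)` stays in `X` on `[0,T]` and hits the target `M` at time `T`. -/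
def RoA {n : ℕ} (f : (Fin n → ℝ) → (Fin n → ℝ)) (X M : Set (Fin n → ℝ)) (T : ℝ) :
    Set (Fin n → ℝ) :=
  {x₀ | ∃ x : ℝ → (Fin n → ℝ), x 0 = x₀ ∧
    (∀ t ∈ Icc (0 : ℝ) T, HasDerivAt x (f (x t)) t) ∧
    (∀ t ∈ Icc (0 : ℝ) T, x t ∈ X) ∧ x T ∈ M}

theorem IsSumSq.map {R S : Type*} [Semiring R] [Semiring S] (φ : R →+* S) {s : R}
    (hs : IsSumSq s) : IsSumSq (φ s) := by
  induction hs with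
  | zero => simp
  | sq_add a _ ih =>
    rw [map_add, map_mul]
    exact .sq_add _ ih


theorem eval_nonneg_of_mem_quadraticModule {m : ℕ} {σ : Type*} {g : Fin m → MvPolynomial σ ℝ}
    {p : MvPolynomial σ ℝ} (hp : p ∈ QuadraticModule g) {y : σ → ℝ}
    (hy : ∀ i, 0 ≤ eval y (g i)) : 0 ≤ eval y p := by
  obtain ⟨s₀, s, hs₀, hs, rfl⟩ := hp
  simp only [map_add, map_sum, map_mul]
  exact add_nonneg (hs₀.map (eval y)).nonneg
    (Finset.sum_nonneg fun i _ => mul_nonneg ((hs i).map (eval y)).nonneg (hy i))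

theorem MvPolynomial.eval_aeval {R σ τ : Type*} [CommSemiring R] (y : τ → R)
    (φ : σ → MvPolynomial τ R) (p : MvPolynomial σ R) :
    eval y (aeval φ p) = eval (fun i => eval y (φ i)) p := by
  rw [map_aeval, algebraMap_eq]
  exact congrArg (eval₂Hom · _ p) (eval₂Hom_comp_C (RingHom.id R) y)

theorem MvPolynomial.hasDerivAt_eval_comp {𝕜 σ : Type*} [NontriviallyNormedField 𝕜] [Fintype σ]
    {γ : 𝕜 → σ → 𝕜} {γ' : σ → 𝕜} {t : 𝕜} (hγ : HasDerivAt γ γ' t) (p : MvPolynomial σ 𝕜) :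
    HasDerivAt (fun s => eval (γ s) p) (∑ i, eval (γ t) (pderiv i p) * γ' i) t := by
  classical
  induction p using MvPolynomial.induction_on with
  | C a => simpa using hasDerivAt_const t a
  | add p q hp hq =>
    simp only [map_add, add_mul, Finset.sum_add_distrib]
    exact hp.add hq
  | mul_X p i hp =>
    simp only [map_mul, eval_X]
    refine (hp.mul (hasDerivAt_pi.mp hγ i)).congr_deriv ?_
    simp only [Derivation.leibniz, pderiv_X, smul_eq_mul, map_add, map_mul, eval_X, add_mul,
      Finset.sum_add_distrib, Finset.sum_mul]
    simp [Pi.single_apply, mul_comm, mul_left_comm, add_comm]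

theorem hasDerivAt_fin_cons_self {n : ℕ} {x : ℝ → Fin n → ℝ} {x' : Fin n → ℝ} {t : ℝ}
    (hx : HasDerivAt x x' t) :
    HasDerivAt (fun s => (Fin.cons s (x s) : Fin (n + 1) → ℝ)) (Fin.cons 1 x') t := by
  refine hasDerivAt_pi.mpr fun i => ?_
  cases i using Fin.cases with
  | zero => simpa only [Fin.cons_zero] using hasDerivAt_id' t
  | succ k => simpa only [Fin.cons_succ] using hasDerivAt_pi.mp hx k

/-- `∂_t v + ⟨∇_x v, f⟩`, the variable `0` being time. -/
noncomputable def lieDerivative {n : ℕ} (f : Fin n → MvPolynomial (Fin n) ℝ)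
    (v : MvPolynomial (Fin (n + 1)) ℝ) : MvPolynomial (Fin (n + 1)) ℝ :=
  pderiv 0 v + ∑ k : Fin n, pderiv k.succ v * rename Fin.succ (f k)

theorem hasDerivAt_eval_lieDerivative {n : ℕ} {f : Fin n → MvPolynomial (Fin n) ℝ}
    {x : ℝ → Fin n → ℝ} {t : ℝ} (hx : HasDerivAt x (fun k => eval (x t) (f k)) t)
    (v : MvPolynomial (Fin (n + 1)) ℝ) :
    HasDerivAt (fun s => eval (Fin.cons s (x s)) v)
      (eval (Fin.cons t (x t)) (lieDerivative f v)) t := by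
  refine (MvPolynomial.hasDerivAt_eval_comp (hasDerivAt_fin_cons_self hx) v).congr_deriv ?_
  simp [lieDerivative, Fin.sum_univ_succ, eval_rename, Function.comp_def]

theorem eval_aeval_fin_cons_C {n : ℕ} (c : ℝ) (y : Fin n → ℝ)
    (v : MvPolynomial (Fin (n + 1)) ℝ) :
    eval y (aeval (Fin.cons (C c) X) v) = eval (Fin.cons c y) v := by
  rw [MvPolynomial.eval_aeval]
  congr 2
  funext i
  cases i using Fin.cases <;> simp

theorem RoA_subset {n : ℕ} {F : (Fin n → ℝ) → Fin n → ℝ} {X M : Set (Fin n → ℝ)} {T : ℝ}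
    (hT : 0 ≤ T) : RoA F X M T ⊆ X := by
  rintro _ ⟨x, rfl, -, hX, -⟩
  exact hX 0 (left_mem_Icc.2 hT)

theorem eval_fin_cons_nonneg_of_mem_Icc {n m : ℕ} {g : Fin m → MvPolynomial (Fin n) ℝ} {T t : ℝ}
    (ht : t ∈ Icc 0 T) {y : Fin n → ℝ} (hy : ∀ i, 0 ≤ eval y (g i)) (i : Fin (m + 1)) :
    0 ≤ eval (Fin.cons t y)
      ((Fin.cons ((C T - X 0) * X 0) (fun i => rename Fin.succ (g i)) :
        Fin (m + 1) → MvPolynomial (Fin (n + 1)) ℝ) i) := by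
  cases i using Fin.cases with
  | zero => simpa using mul_nonneg (sub_nonneg.2 ht.2) ht.1
  | succ i => simpa [eval_rename, Function.comp_def] using hy i

theorem eval_fin_cons_zero_nonneg_of_mem_RoA {n m ℓ : ℕ} {f : Fin n → MvPolynomial (Fin n) ℝ}
    {g : Fin m → MvPolynomial (Fin n) ℝ} {h : Fin ℓ → MvPolynomial (Fin n) ℝ} {T : ℝ} (hT : 0 ≤ T)
    {v : MvPolynomial (Fin (n + 1)) ℝ}
    (hlie : -lieDerivative f v ∈
      QuadraticModule (Fin.cons ((C T - X 0) * X 0) (fun i => rename Fin.succ (g i))))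
    (hvT : aeval (Fin.cons (C T) X) v ∈ QuadraticModule h) {x₀ : Fin n → ℝ}
    (hx₀ : x₀ ∈ RoA (fun y k => eval y (f k)) {y | ∀ i, 0 ≤ eval y (g i)}
      {y | ∀ j, 0 ≤ eval y (h j)} T) :
    0 ≤ eval (Fin.cons 0 x₀) v := by
  obtain ⟨x, rfl, hsol, hX, hM⟩ := hx₀
  have hderiv t (ht : t ∈ Icc 0 T) := hasDerivAt_eval_lieDerivative (hsol t ht) v
  have hanti : AntitoneOn (fun s => eval (Fin.cons s (x s)) v) (Icc 0 T) := by
    refine antitoneOn_of_hasDerivWithinAt_nonpos (convex_Icc 0 T)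
      (f' := fun t => eval (Fin.cons t (x t)) (lieDerivative f v))
      (fun t ht => (hderiv t ht).continuousAt.continuousWithinAt) (fun t ht => ?_) (fun t ht => ?_)
    <;> rw [interior_Icc] at ht
    · exact (hderiv t (Ioo_subset_Icc_self ht)).hasDerivWithinAt
    · have ht' := Ioo_subset_Icc_self ht
      have hneg := eval_nonneg_of_mem_quadraticModule hlie
        (eval_fin_cons_nonneg_of_mem_Icc ht' (hX t ht'))
      rwa [map_neg, neg_nonneg] at hneg
  have hvT' : 0 ≤ eval (Fin.cons T (x T)) v := by
    simpa only [eval_aeval_fin_cons_C] using eval_nonneg_of_mem_quadraticModule hvT hM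
  exact hvT'.trans (hanti (left_mem_Icc.2 hT) (right_mem_Icc.2 hT) hT)

/-- Polynomials in `(t, x₁, …, x_n)` are modelled as `MvPolynomial (Fin (n+1)) ℝ` with variable
`0` playing the role of `t` and `k.succ` that of `x_k`; `v(c, ·) = aeval (Fin.cons (C c) X) v`.
The vector field is `y ↦ (eval y (f k))_k`. -/
theorem sostab_stmt7_general {n m ℓ : ℕ}
    (f : Fin n → MvPolynomial (Fin n) ℝ) (T : ℝ) (hT : 0 < T)
    (g : Fin m → MvPolynomial (Fin n) ℝ) (h : Fin ℓ → MvPolynomial (Fin n) ℝ)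
    (v : MvPolynomial (Fin (n + 1)) ℝ) (w : MvPolynomial (Fin n) ℝ)
    (hwv : w - aeval (Fin.cons (C (0 : ℝ)) MvPolynomial.X) v - 1 ∈ QuadraticModule g)
    (hlie : -(pderiv (0 : Fin (n + 1)) v
        + ∑ k : Fin n, pderiv k.succ v * rename Fin.succ (f k)) ∈
      QuadraticModule (Fin.cons ((C T - MvPolynomial.X (0 : Fin (n + 1))) * MvPolynomial.X 0)
        (fun i => rename Fin.succ (g i))))
    (hvT : aeval (Fin.cons (C T) MvPolynomial.X) v ∈ QuadraticModule h) :
    RoA (fun y k => eval y (f k)) {y | ∀ i, 0 ≤ eval y (g i)} {y | ∀ j, 0 ≤ eval y (h j)} T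
        ⊆ {y : Fin n → ℝ | 0 ≤ eval (Fin.cons 0 y) v} ∧
      RoA (fun y k => eval y (f k)) {y | ∀ i, 0 ≤ eval y (g i)} {y | ∀ j, 0 ≤ eval y (h j)} T
        ⊆ {y : Fin n → ℝ | 1 ≤ eval y w} := by
  have hv0 x₀ (hx₀ : x₀ ∈ RoA _ _ _ T) := eval_fin_cons_zero_nonneg_of_mem_RoA hT.le hlie hvT hx₀
  refine ⟨hv0, fun x₀ hx₀ => ?_⟩
  have hw0 := eval_nonneg_of_mem_quadraticModule hwv (RoA_subset hT.le hx₀)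
  rw [map_sub, map_sub, map_one, eval_aeval_fin_cons_C] at hw0
  show 1 ≤ eval x₀ w
  linarith [hv0 x₀ hx₀]

/-- SoS certificates yield outer approximations of the region of attraction.
Polynomials in `(t, x₁, …, x_n)` are modelled as `MvPolynomial (Fin (n+1)) ℝ` with variable
`0` playing the role of `t` and `k.succ` that of `x_k`; `v(c, ·) = aeval (Fin.cons (C c) X) v`.
The vector field is `y ↦ (eval y (f k))_k`. -/
theorem sostab_stmt7 {n m ℓ : ℕ}
    (f : Fin n → MvPolynomial (Fin n) ℝ) (T : ℝ) (hT : 0 < T)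
    (g : Fin m → MvPolynomial (Fin n) ℝ) (h : Fin ℓ → MvPolynomial (Fin n) ℝ)
    (hXcl : IsClosed {y : Fin n → ℝ | ∀ i, 0 ≤ eval y (g i)})
    (hMX : {y : Fin n → ℝ | ∀ j, 0 ≤ eval y (h j)} ⊆ {y : Fin n → ℝ | ∀ i, 0 ≤ eval y (g i)})
    (v : MvPolynomial (Fin (n + 1)) ℝ) (w : MvPolynomial (Fin n) ℝ)
    (hw : w ∈ QuadraticModule g)
    (hwv : w - aeval (Fin.cons (C (0 : ℝ)) MvPolynomial.X) v - 1 ∈ QuadraticModule g)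
    (hlie : -(pderiv (0 : Fin (n + 1)) v
        + ∑ k : Fin n, pderiv k.succ v * rename Fin.succ (f k)) ∈
      QuadraticModule (Fin.cons ((C T - MvPolynomial.X (0 : Fin (n + 1))) * MvPolynomial.X 0)
        (fun i => rename Fin.succ (g i))))
    (hvT : aeval (Fin.cons (C T) MvPolynomial.X) v ∈ QuadraticModule h) :
    RoA (fun y k => eval y (f k)) {y | ∀ i, 0 ≤ eval y (g i)} {y | ∀ j, 0 ≤ eval y (h j)} T
        ⊆ {y : Fin n → ℝ | 0 ≤ eval (Fin.cons 0 y) v} ∧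
      RoA (fun y k => eval y (f k)) {y | ∀ i, 0 ≤ eval y (g i)} {y | ∀ j, 0 ≤ eval y (h j)} T
        ⊆ {y : Fin n → ℝ | 1 ≤ eval y w} :=
  sostab_stmt7_general f T hT g h v w hwv hlie hvT
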